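/- arXiv:1809.05137 — 6 statements merged into one kernel-verified Lean document; each statement's English description precedes it below -/
import Mathlib

section
/- Let m ≥ 1 and let χ be a primitive even character mod u^{m+1}, with associated function ψ_χ on monic polynomials of 𝔽_q[T]. Then the following identity of formal power series in ℂ[[t]] holds: (1 − t) · Σ_{d=0}^∞ (Σ_{f ∈ 𝔽_q[T] monic, deg f = d} ψ_χ(f)) · t^d = Σ_{d=0}^∞ (Σ_{f ∈ 𝔽_q[u] monic, deg f = d, f(0) ≠ 0} χ(f mod u^{m+1})) · t^d. -/
open Polynomial

open Classical in
/-- Evaluate a character of the unit group on a ring element: `χ x` if `x` is a unit, else `0`. -/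
noncomputable def charVal {R : Type*} [Monoid R] (χ : Rˣ →* ℂˣ) (x : R) : ℂ :=
  if h : IsUnit x then ((χ h.unit : ℂˣ) : ℂ) else 0

/-- The quotient ring `𝔽_q[u]/(u^{m+1})`. -/
abbrev ModRing (Fq : Type) [Field Fq] (m : ℕ) : Type :=
  Fq[X] ⧸ Ideal.span {(X : Fq[X]) ^ (m + 1)}

/-- A character mod `u^{m+1}` is primitive and even if it is trivial on the nonzero constants
and nontrivial on the residues of elements `1 + a·u^m`. -/
def IsPrimitiveEven (Fq : Type) [Field Fq] (m : ℕ) (χ : (ModRing Fq m)ˣ →* ℂˣ) : Prop :=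
  (∀ a : Fq, a ≠ 0 →
      charVal χ (Ideal.Quotient.mk (Ideal.span {(X : Fq[X]) ^ (m + 1)}) (C a)) = 1) ∧
  (∃ a : Fq,
      charVal χ (Ideal.Quotient.mk (Ideal.span {(X : Fq[X]) ^ (m + 1)}) (1 + C a * X ^ m)) ≠ 1)

/-- `ψ_χ(f) = χ(rev f mod u^{m+1})` where `rev f = u^{deg f}·f(1/u)`. -/
noncomputable def psiChar {Fq : Type} [Field Fq] (m : ℕ) (χ : (ModRing Fq m)ˣ →* ℂˣ)
    (f : Fq[X]) : ℂ :=
  charVal χ (Ideal.Quotient.mk (Ideal.span {(X : Fq[X]) ^ (m + 1)}) f.reverse)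

/-- `c_d(ψ_χ)`: the sum of `ψ_χ` over monic polynomials of degree `d`. -/
noncomputable def psiCoeff {Fq : Type} [Field Fq] (m : ℕ) (χ : (ModRing Fq m)ˣ →* ℂˣ)
    (d : ℕ) : ℂ :=
  ∑ᶠ f ∈ {f : Fq[X] | f.Monic ∧ f.natDegree = d}, psiChar m χ f

/-- `L(s, ψ_χ) = Σ_{d=0}^{m-1} c_d(ψ_χ)·q^{-ds}`. -/
noncomputable def Lpsi {Fq : Type} [Field Fq] [Fintype Fq] (m : ℕ)
    (χ : (ModRing Fq m)ˣ →* ℂˣ) (s : ℂ) : ℂ :=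
  ∑ d ∈ Finset.range m, psiCoeff m χ d * (Fintype.card Fq : ℂ) ^ (-(d : ℂ) * s)

/-- The root number `ε_{ψ_χ} = q^{-(m-1)/2}·c_{m-1}(ψ_χ)`. -/
noncomputable def epsPsi {Fq : Type} [Field Fq] [Fintype Fq] (m : ℕ)
    (χ : (ModRing Fq m)ˣ →* ℂˣ) : ℂ :=
  (Fintype.card Fq : ℂ) ^ (-(((m : ℂ) - 1) / 2)) * psiCoeff m χ (m - 1)

/-!
Comparing coefficients, the identity says that for `d ≥ 1` the sum of `ψ_χ` over monic `f` of
degree `d` with `f(0) = 0` is the coefficient of degree `d - 1`, and that over the monic `f` of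
degree `d` with `f(0) ≠ 0` the sums of `ψ_χ(f)` and of `χ(f)` agree. The first holds because
`rev (T·g) = rev g`, so `f = T·g` contributes `ψ_χ(g)`. For the second, `rev f = f(0)·f*` with
`f* = f(0)⁻¹·rev f` again monic of degree `d` with nonzero constant term, and `f ↦ f*` is an
involution; as `χ` is even, `ψ_χ(f) = χ(f*)`.
-/

namespace Polynomial

section Semiring

variable {R : Type*} [Semiring R]

theorem finite_setOf_natDegree_le [Finite R] (d : ℕ) : {f : R[X] | f.natDegree ≤ d}.Finite := by
  have : Finite (degreeLT R (d + 1)) :=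
    Finite.of_equiv _ (degreeLTEquiv R (d + 1)).toEquiv.symm
  refine (degreeLT R (d + 1) : Set R[X]).toFinite.subset fun f hf => ?_
  rw [SetLike.mem_coe, mem_degreeLT]
  exact degree_le_natDegree.trans_lt (by exact_mod_cast Nat.lt_succ_of_le hf)

theorem finite_setOf_monic_natDegree_eq [Finite R] (d : ℕ) :
    {f : R[X] | f.Monic ∧ f.natDegree = d}.Finite :=
  (finite_setOf_natDegree_le d).subset fun _ hf => hf.2.le

theorem disjoint_image_X_mul {s : Set R[X]} (hs : ∀ f ∈ s, f.eval 0 ≠ 0) (t : Set R[X]) :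
    Disjoint s ((X * ·) '' t) :=
  Set.disjoint_left.2 fun f hf ⟨_, _, hg⟩ =>
    hs f hf (by rw [← hg, ← coeff_zero_eq_eval_zero, coeff_X_mul_zero])

theorem reverse_reverse_of_coeff_zero_ne_zero {f : R[X]} (h0 : f.coeff 0 ≠ 0) :
    f.reverse.reverse = f := by
  have hd : f.reverse.natDegree = f.natDegree := by
    rw [reverse_natDegree, natTrailingDegree_eq_zero.2 (Or.inr h0), Nat.sub_zero]
  ext n
  rw [coeff_reverse, coeff_reverse, hd, revAt_invol]

variable [Nontrivial R]

theorem setOf_monic_natDegree_zero_eval_ne_zero :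
    {f : R[X] | f.Monic ∧ f.natDegree = 0 ∧ f.eval 0 ≠ 0} =
      {f | f.Monic ∧ f.natDegree = 0} :=
  Set.ext fun _ => ⟨fun h => ⟨h.1, h.2.1⟩,
    fun ⟨hf, hd⟩ => ⟨hf, hd, by simp [hf.natDegree_eq_zero.1 hd]⟩⟩

theorem setOf_monic_natDegree_succ (d : ℕ) :
    {f : R[X] | f.Monic ∧ f.natDegree = d + 1} =
      {f | f.Monic ∧ f.natDegree = d + 1 ∧ f.eval 0 ≠ 0} ∪
        (X * ·) '' {f | f.Monic ∧ f.natDegree = d} := by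
  ext f
  simp only [Set.mem_union, Set.mem_ofPred_eq, Set.mem_image]
  constructor
  · rintro ⟨hf, hd⟩
    by_cases h0 : f.eval 0 = 0
    · obtain ⟨g, rfl⟩ := X_dvd_iff (f := f) |>.2 (by rwa [coeff_zero_eq_eval_zero])
      have hg := monic_X.of_mul_monic_left hf
      exact Or.inr ⟨g, ⟨hg, by rwa [natDegree_X_mul hg.ne_zero, add_left_inj] at hd⟩, rfl⟩
    · exact Or.inl ⟨hf, hd, h0⟩
  · rintro (⟨hf, hd, -⟩ | ⟨g, ⟨hg, rfl⟩, rfl⟩)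
    · exact ⟨hf, hd⟩
    · exact ⟨monic_X.mul hg, natDegree_X_mul hg.ne_zero⟩

end Semiring

theorem isUnit_mk_span_X_pow_of_isUnit_coeff_zero {R : Type*} [CommRing R] {f : R[X]}
    (h : IsUnit (f.coeff 0)) (n : ℕ) :
    IsUnit (Ideal.Quotient.mk (Ideal.span {(X : R[X]) ^ n}) f) := by
  have hnil : IsNilpotent (Ideal.Quotient.mk (Ideal.span {(X : R[X]) ^ n}) (f - C (f.coeff 0))) :=
    ⟨n, by
      rw [← map_pow, Ideal.Quotient.eq_zero_iff_mem, Ideal.mem_span_singleton]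
      exact pow_dvd_pow_of_dvd (X_dvd_iff.2 (by simp)) n⟩
  simpa using
    hnil.isUnit_add_right_of_commute ((h.map C).map (Ideal.Quotient.mk _)) (Commute.all _ _)

section Field

variable {K : Type*} [Field K] {f : K[X]}

noncomputable def reverseMonic (f : K[X]) : K[X] :=
  C (f.coeff 0)⁻¹ * f.reverse

theorem reverse_eq_C_mul_reverseMonic (h0 : f.coeff 0 ≠ 0) :
    f.reverse = C (f.coeff 0) * reverseMonic f := by
  rw [reverseMonic, ← mul_assoc, ← C_mul, mul_inv_cancel₀ h0, C_1, one_mul]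

theorem coeff_zero_reverseMonic (f : K[X]) :
    (reverseMonic f).coeff 0 = (f.coeff 0)⁻¹ * f.leadingCoeff := by
  rw [reverseMonic, coeff_C_mul, coeff_zero_reverse]

theorem monic_reverseMonic (h0 : f.coeff 0 ≠ 0) : (reverseMonic f).Monic := by
  rw [Monic, reverseMonic, leadingCoeff_mul, leadingCoeff_C, reverse_leadingCoeff,
    trailingCoeff_eq_coeff_zero h0, inv_mul_cancel₀ h0]

theorem natDegree_reverseMonic (h0 : f.coeff 0 ≠ 0) :
    (reverseMonic f).natDegree = f.natDegree := by
  rw [reverseMonic, natDegree_C_mul (inv_ne_zero h0), reverse_natDegree,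
    natTrailingDegree_eq_zero.2 (Or.inr h0), Nat.sub_zero]

theorem reverseMonic_reverseMonic (hf : f.Monic) (h0 : f.coeff 0 ≠ 0) :
    reverseMonic (reverseMonic f) = f := by
  rw [reverseMonic, coeff_zero_reverseMonic, hf.leadingCoeff, mul_one, inv_inv, reverseMonic,
    reverse_mul_of_domain, reverse_C, reverse_reverse_of_coeff_zero_ne_zero h0, ← mul_assoc,
    ← C_mul, mul_inv_cancel₀ h0, C_1, one_mul]

theorem bijOn_reverseMonic (d : ℕ) :
    Set.BijOn reverseMonic {f : K[X] | f.Monic ∧ f.natDegree = d ∧ f.eval 0 ≠ 0}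
      {f | f.Monic ∧ f.natDegree = d ∧ f.eval 0 ≠ 0} := by
  have hmaps : Set.MapsTo reverseMonic {f : K[X] | f.Monic ∧ f.natDegree = d ∧ f.eval 0 ≠ 0}
      {f | f.Monic ∧ f.natDegree = d ∧ f.eval 0 ≠ 0} := by
    rintro f ⟨hf, hd, h0⟩
    rw [← coeff_zero_eq_eval_zero] at h0
    refine ⟨monic_reverseMonic h0, (natDegree_reverseMonic h0).trans hd, ?_⟩
    rw [← coeff_zero_eq_eval_zero, coeff_zero_reverseMonic, hf.leadingCoeff, mul_one]
    exact inv_ne_zero h0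
  have hinv : Set.LeftInvOn reverseMonic reverseMonic
      {f : K[X] | f.Monic ∧ f.natDegree = d ∧ f.eval 0 ≠ 0} := fun f ⟨hf, _, h0⟩ =>
    reverseMonic_reverseMonic hf (by rwa [coeff_zero_eq_eval_zero])
  exact Set.InvOn.bijOn ⟨hinv, hinv⟩ hmaps hmaps

end Field

end Polynomial

theorem charVal_mul {R : Type*} [Monoid R] (χ : Rˣ →* ℂˣ) {x y : R} (hx : IsUnit x)
    (hy : IsUnit y) : charVal χ (x * y) = charVal χ x * charVal χ y := by
  rw [charVal, charVal, charVal, dif_pos hx, dif_pos hy, dif_pos (hx.mul hy), ← Units.val_mul,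
    ← map_mul]
  congr 3
  ext
  simp

section Psi

variable {K : Type} [Field K] {m : ℕ} (χ : (ModRing K m)ˣ →* ℂˣ)

theorem psiChar_X_mul (g : K[X]) : psiChar m χ (X * g) = psiChar m χ g := by
  rw [psiChar, psiChar, reverse_X_mul]

variable {χ}
variable (heven : ∀ a : K, a ≠ 0 →
  charVal χ (Ideal.Quotient.mk (Ideal.span {(X : K[X]) ^ (m + 1)}) (C a)) = 1)
include heven

theorem psiChar_eq_charVal_reverseMonic {f : K[X]} (h0 : f.coeff 0 ≠ 0) :
    psiChar m χ f =
      charVal χ (Ideal.Quotient.mk (Ideal.span {(X : K[X]) ^ (m + 1)}) (reverseMonic f)) := by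
  have hunit {g : K[X]} (hg : g.coeff 0 ≠ 0) :
      IsUnit (Ideal.Quotient.mk (Ideal.span {(X : K[X]) ^ (m + 1)}) g) :=
    isUnit_mk_span_X_pow_of_isUnit_coeff_zero hg.isUnit (m + 1)
  have hrev0 : (reverseMonic f).coeff 0 ≠ 0 := by
    rw [coeff_zero_reverseMonic]
    exact mul_ne_zero (inv_ne_zero h0) (leadingCoeff_ne_zero.2 (by rintro rfl; simp at h0))
  rw [psiChar, reverse_eq_C_mul_reverseMonic h0, map_mul,
    charVal_mul χ (hunit (by simpa using h0)) (hunit hrev0), heven _ h0, one_mul]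

theorem finsum_psiChar_eq_finsum_charVal (d : ℕ) :
    ∑ᶠ f ∈ {f : K[X] | f.Monic ∧ f.natDegree = d ∧ f.eval 0 ≠ 0}, psiChar m χ f =
      ∑ᶠ f ∈ {f : K[X] | f.Monic ∧ f.natDegree = d ∧ f.eval 0 ≠ 0},
        charVal χ (Ideal.Quotient.mk (Ideal.span {(X : K[X]) ^ (m + 1)}) f) :=
  finsum_mem_eq_of_bijOn reverseMonic (bijOn_reverseMonic d) fun _ ⟨_, _, h0⟩ =>
    psiChar_eq_charVal_reverseMonic heven (by rwa [coeff_zero_eq_eval_zero])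

end Psi

theorem psiCoeff_succ {K : Type} [Field K] [Finite K] {m : ℕ} (χ : (ModRing K m)ˣ →* ℂˣ)
    (d : ℕ) :
    psiCoeff m χ (d + 1) =
      ∑ᶠ f ∈ {f : K[X] | f.Monic ∧ f.natDegree = d + 1 ∧ f.eval 0 ≠ 0}, psiChar m χ f +
        psiCoeff m χ d := by
  rw [psiCoeff, setOf_monic_natDegree_succ,
    finsum_mem_union (disjoint_image_X_mul (fun _ h => h.2.2) _)
      ((finite_setOf_monic_natDegree_eq _).subset fun _ h => ⟨h.1, h.2.1⟩)
      ((finite_setOf_monic_natDegree_eq d).image _),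
    finsum_mem_image (mul_right_injective₀ X_ne_zero).injOn]
  simp only [psiChar_X_mul]
  rfl

theorem stmt_8_general (Fq : Type) [Field Fq] [Fintype Fq] (m : ℕ)
    (χ : (ModRing Fq m)ˣ →* ℂˣ) (hχ : IsPrimitiveEven Fq m χ) :
    ((1 : PowerSeries ℂ) - PowerSeries.X) *
        PowerSeries.mk (fun d =>
          ∑ᶠ f ∈ {f : Fq[X] | f.Monic ∧ f.natDegree = d}, psiChar m χ f) =
      PowerSeries.mk (fun d =>
        ∑ᶠ f ∈ {f : Fq[X] | f.Monic ∧ f.natDegree = d ∧ Polynomial.eval 0 f ≠ 0},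
          charVal χ (Ideal.Quotient.mk (Ideal.span {(X : Fq[X]) ^ (m + 1)}) f)) := by
  ext d
  rw [sub_mul, one_mul, map_sub, PowerSeries.coeff_mk, PowerSeries.coeff_mk,
    ← finsum_psiChar_eq_finsum_charVal hχ.1]
  cases d with
  | zero =>
    rw [PowerSeries.coeff_zero_X_mul, sub_zero, setOf_monic_natDegree_zero_eval_ne_zero]
  | succ d =>
    rw [PowerSeries.coeff_succ_X_mul, PowerSeries.coeff_mk]
    exact sub_eq_of_eq_add (psiCoeff_succ χ d)

theorem stmt_8 (Fq : Type) [Field Fq] [Fintype Fq] (m : ℕ) (hm : 1 ≤ m)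
    (χ : (ModRing Fq m)ˣ →* ℂˣ) (hχ : IsPrimitiveEven Fq m χ) :
    ((1 : PowerSeries ℂ) - PowerSeries.X) *
        PowerSeries.mk (fun d =>
          ∑ᶠ f ∈ {f : Fq[X] | f.Monic ∧ f.natDegree = d}, psiChar m χ f) =
      PowerSeries.mk (fun d =>
        ∑ᶠ f ∈ {f : Fq[X] | f.Monic ∧ f.natDegree = d ∧ Polynomial.eval 0 f ≠ 0},
          charVal χ (Ideal.Quotient.mk (Ideal.span {(X : Fq[X]) ^ (m + 1)}) f)) :=
  stmt_8_general Fq m χ hχ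
end

section
/- Let 𝔽_q be a finite field with q elements and let m ≥ 1 be an integer. The number of group homomorphisms χ : (𝔽_q[u]/(u^{m+1}))ˣ → ℂˣ that are trivial on the residues of the nonzero constants 𝔽_qˣ and nontrivial on the subgroup of residues of elements 1 + a·u^m with a ∈ 𝔽_q equals q^m − q^{m−1}. -/
/-!
Let `G = (𝔽_q[u]/(u^{m+1}))ˣ`, `H` the image of `𝔽_qˣ` and `B = {1 + a u^m}`. An element is a unit
iff its constant term is nonzero, so `|G| = (q - 1) q^m` and `[G : H] = q^m`; characters trivial on
`H` are characters of `G ⧸ H`, so there are `q^m` of them. Since `(a u^m)² = 0`, `a ↦ 1 + a u^m`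
embeds `(𝔽_q, +)` into `G`, and its image `B` meets `H` trivially (it reduces to `1` mod `u`), so
`[G : H ⊔ B] = q^(m-1)` of those characters are also trivial on `B`.
-/

open Polynomial

theorem charVal_units {R : Type*} [Monoid R] (χ : Rˣ →* ℂˣ) (u : Rˣ) :
    charVal χ (u : R) = χ u := by
  rw [charVal, dif_pos u.isUnit, IsUnit.unit_of_val_units]

section SquareZero

variable {S R : Type*} [Ring R] {ε : R}

theorem smul_mul_smul_eq_zero_of_mul_self_eq_zero [CommRing S] [Algebra S R] (hε : ε * ε = 0)
    (a b : S) : (a • ε) * (b • ε) = 0 := by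
  rw [smul_mul_smul_comm, hε, smul_zero]

def unitsOneAddSMul [CommRing S] [Algebra S R] (hε : ε * ε = 0) : Multiplicative S →* Rˣ where
  toFun a :=
    { val := 1 + a.toAdd • ε
      inv := 1 + (-a.toAdd) • ε
      val_inv := by
        rw [mul_add, add_mul, add_mul, smul_mul_smul_eq_zero_of_mul_self_eq_zero hε, neg_smul]
        noncomm_ring
      inv_val := by
        rw [mul_add, add_mul, add_mul, smul_mul_smul_eq_zero_of_mul_self_eq_zero hε, neg_smul]
        noncomm_ring }
  map_one' := Units.ext (by simp)
  map_mul' a b := Units.ext (by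
    simp only [toAdd_mul, add_smul, Units.val_mul, mul_add, add_mul,
      smul_mul_smul_eq_zero_of_mul_self_eq_zero hε]
    noncomm_ring)

@[simp]
theorem val_unitsOneAddSMul [CommRing S] [Algebra S R] (hε : ε * ε = 0) (a : Multiplicative S) :
    (unitsOneAddSMul hε a : R) = 1 + a.toAdd • ε := rfl

theorem unitsOneAddSMul_injective [Field S] [Algebra S R] (hε : ε * ε = 0) (hε0 : ε ≠ 0) :
    Function.Injective (unitsOneAddSMul (S := S) hε) := by
  rw [injective_iff_map_eq_one]
  intro a ha
  have : a.toAdd • ε = 0 := by simpa using congrArg Units.val ha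
  simpa [hε0] using this

end SquareZero

theorem Subgroup.card_mul_index_sup_of_disjoint {G : Type*} [CommGroup G] {H K : Subgroup G}
    (h : Disjoint H K) : Nat.card K * (H ⊔ K).index = H.index := by
  rw [← relIndex_mul_index (le_sup_left : H ≤ H ⊔ K), relIndex_sup_left K H, ← inf_relIndex_left,
    h.symm.eq_bot, relIndex_bot_left]

section Characters

variable {G : Type*} [CommGroup G] [Finite G]

theorem card_monoidHom_units_le_ker (H : Subgroup G) :
    Nat.card {χ : G →* ℂˣ // H ≤ χ.ker} = H.index := by
  rw [Subgroup.index, ← CommGroup.card_domRestrictHom_ker ℂ H]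
  refine Nat.card_congr (Equiv.subtypeEquivRight fun χ => ?_)
  simp [SetLike.le_def]

theorem card_monoidHom_units_le_ker_and_not_le_ker (H K : Subgroup G) :
    Nat.card {χ : G →* ℂˣ // H ≤ χ.ker ∧ ¬ K ≤ χ.ker} = H.index - (H ⊔ K).index := by
  have hsub : {χ : G →* ℂˣ | H ⊔ K ≤ χ.ker} ⊆ {χ | H ≤ χ.ker} :=
    fun _ (hχ : H ⊔ K ≤ _) => le_sup_left.trans hχ
  have hsdiff : {χ : G →* ℂˣ | H ≤ χ.ker ∧ ¬ K ≤ χ.ker} =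
      {χ | H ≤ χ.ker} \ {χ | H ⊔ K ≤ χ.ker} := by
    ext χ
    simp only [Set.mem_ofPred_eq, Set.mem_sdiff, sup_le_iff]
    tauto
  rw [← card_monoidHom_units_le_ker, ← card_monoidHom_units_le_ker, ← Set.coe_ofPred,
    Nat.card_coe_set_eq, hsdiff, Set.ncard_sdiff hsub]
  rfl

end Characters

namespace ModRing

variable {Fq : Type} [Field Fq] {m : ℕ}

variable (Fq m) in
noncomputable def residue : ModRing Fq m →ₐ[Fq] Fq :=
  Ideal.Quotient.liftₐ _ (aeval 0) fun f hf => by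
    obtain ⟨g, rfl⟩ := Ideal.mem_span_singleton.mp hf
    simp

@[simp]
theorem residue_mk (f : Fq[X]) : residue Fq m (Ideal.Quotient.mk _ f) = f.eval 0 := by
  simp [residue]

theorem isNilpotent_of_residue_eq_zero {x : ModRing Fq m} (hx : residue Fq m x = 0) :
    IsNilpotent x := by
  obtain ⟨f, rfl⟩ := Ideal.Quotient.mk_surjective x
  refine ⟨m + 1, ?_⟩
  rw [← map_pow, Ideal.Quotient.eq_zero_iff_mem, Ideal.mem_span_singleton]
  exact pow_dvd_pow_of_dvd (X_dvd_iff.mpr (by simpa [coeff_zero_eq_eval_zero] using hx)) _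

theorem isUnit_iff_residue_ne_zero {x : ModRing Fq m} : IsUnit x ↔ residue Fq m x ≠ 0 := by
  refine ⟨fun h => (h.map (residue Fq m)).ne_zero, fun h => ?_⟩
  have hnil : IsNilpotent (x - algebraMap Fq _ (residue Fq m x)) :=
    isNilpotent_of_residue_eq_zero (by simp)
  simpa using hnil.isUnit_add_left_of_commute (h.isUnit.map (algebraMap Fq _)) (Commute.all _ _)

noncomputable def powerBasis : PowerBasis Fq (ModRing Fq m) :=
  AdjoinRoot.powerBasis' (monic_X_pow (m + 1))

instance : Module.Finite Fq (ModRing Fq m) := powerBasis.finite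

instance [Finite Fq] : Finite (ModRing Fq m) := Module.finite_of_finite Fq

theorem finrank_eq : Module.finrank Fq (ModRing Fq m) = m + 1 := by
  simp [powerBasis.finrank, powerBasis, AdjoinRoot.powerBasis']

theorem finrank_ker_residue :
    Module.finrank Fq (LinearMap.ker (residue Fq m).toLinearMap) = m := by
  have hsurj : Function.Surjective (residue Fq m) := fun c =>
    ⟨algebraMap Fq _ c, (residue Fq m).commutes c⟩
  have h := LinearMap.finrank_range_add_finrank_ker (residue Fq m).toLinearMap
  rw [LinearMap.range_eq_top.mpr hsurj, finrank_top, Module.finrank_self, finrank_eq] at h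
  omega

theorem card_units [Finite Fq] :
    Nat.card (ModRing Fq m)ˣ = Nat.card Fq ^ (m + 1) - Nat.card Fq ^ m := by
  have hunits : Set.range (Units.val : (ModRing Fq m)ˣ → ModRing Fq m) =
      (LinearMap.ker (residue Fq m).toLinearMap : Set (ModRing Fq m))ᶜ := by
    ext x
    exact isUnit_iff_residue_ne_zero
  have hcard := Set.ncard_add_ncard_compl
    (LinearMap.ker (residue Fq m).toLinearMap : Set (ModRing Fq m))
  rw [← hunits, Set.ncard_range_of_injective Units.val_injective, ← Nat.card_coe_set_eq,
    SetLike.coe_sort_coe, Module.natCard_eq_pow_finrank (K := Fq), finrank_ker_residue,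
    Module.natCard_eq_pow_finrank (K := Fq) (V := ModRing Fq m), finrank_eq] at hcard
  omega

variable (Fq m) in
noncomputable def constUnits : Fqˣ →* (ModRing Fq m)ˣ :=
  Units.map (algebraMap Fq (ModRing Fq m) : Fq →* ModRing Fq m)

theorem residue_constUnits (c : Fqˣ) : residue Fq m (constUnits Fq m c) = c :=
  (residue Fq m).commutes c

theorem constUnits_injective : Function.Injective (constUnits Fq m) := fun a b h =>
  Units.ext <| by
    simpa only [residue_constUnits] using congrArg (fun u : (ModRing Fq m)ˣ => residue Fq m u) h

theorem index_range_constUnits [Finite Fq] :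
    (constUnits Fq m).range.index = Nat.card Fq ^ m := by
  have h := (constUnits Fq m).range.index_mul_card
  rw [← Nat.card_congr (MonoidHom.ofInjective constUnits_injective).toEquiv, Nat.card_units,
    card_units, pow_succ (Nat.card Fq) m, ← Nat.mul_sub_one] at h
  exact Nat.eq_of_mul_eq_mul_right (Nat.sub_pos_of_lt Finite.one_lt_card) h

theorem mk_X_pow_ne_zero :
    Ideal.Quotient.mk (Ideal.span {(X : Fq[X]) ^ (m + 1)}) (X ^ m) ≠ 0 := by
  rw [Ne, Ideal.Quotient.eq_zero_iff_mem, Ideal.mem_span_singleton,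
    pow_dvd_pow_iff X_ne_zero not_isUnit_X]
  omega

section Positive

variable {n : ℕ}

theorem mk_X_pow_mul_self :
    Ideal.Quotient.mk (Ideal.span {(X : Fq[X]) ^ (n + 1 + 1)}) (X ^ (n + 1)) *
      Ideal.Quotient.mk _ (X ^ (n + 1)) = 0 := by
  rw [← map_mul, Ideal.Quotient.eq_zero_iff_mem, Ideal.mem_span_singleton, ← pow_add]
  exact pow_dvd_pow X (by omega)

variable (Fq n) in
noncomputable def oneAddXPowUnits : Multiplicative Fq →* (ModRing Fq (n + 1))ˣ :=
  unitsOneAddSMul mk_X_pow_mul_self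

theorem val_oneAddXPowUnits (a : Multiplicative Fq) :
    (oneAddXPowUnits Fq n a : ModRing Fq (n + 1)) =
      Ideal.Quotient.mk _ (1 + C a.toAdd * X ^ (n + 1)) := by
  simp [oneAddXPowUnits, Algebra.smul_def, ← Ideal.Quotient.mk_algebraMap]

theorem oneAddXPowUnits_injective : Function.Injective (oneAddXPowUnits Fq n) :=
  unitsOneAddSMul_injective (S := Fq) mk_X_pow_mul_self mk_X_pow_ne_zero

theorem disjoint_range_constUnits_range_oneAddXPowUnits :
    Disjoint (constUnits Fq (n + 1)).range (oneAddXPowUnits Fq n).range := by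
  rw [Subgroup.disjoint_def]
  rintro _ ⟨c, rfl⟩ ⟨a, ha⟩
  have hc : (c : Fq) = 1 := by
    simpa [val_oneAddXPowUnits, residue_constUnits] using
      (congrArg (fun u : (ModRing Fq (n + 1))ˣ => residue Fq (n + 1) u) ha).symm
  rw [Units.val_eq_one.mp hc, map_one]

theorem index_range_constUnits_sup_range_oneAddXPowUnits [Finite Fq] :
    ((constUnits Fq (n + 1)).range ⊔ (oneAddXPowUnits Fq n).range).index = Nat.card Fq ^ n := by
  have h := Subgroup.card_mul_index_sup_of_disjoint (G := (ModRing Fq (n + 1))ˣ)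
    (disjoint_range_constUnits_range_oneAddXPowUnits (Fq := Fq) (n := n))
  rw [← Nat.card_congr (MonoidHom.ofInjective oneAddXPowUnits_injective).toEquiv,
    index_range_constUnits, pow_succ' (Nat.card Fq) n] at h
  exact Nat.eq_of_mul_eq_mul_left Nat.card_pos h

theorem isPrimitiveEven_iff (χ : (ModRing Fq (n + 1))ˣ →* ℂˣ) :
    IsPrimitiveEven Fq (n + 1) χ ↔
      (constUnits Fq (n + 1)).range ≤ χ.ker ∧ ¬ (oneAddXPowUnits Fq n).range ≤ χ.ker := by
  have hconst (c : Fqˣ) :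
      charVal χ (Ideal.Quotient.mk _ (C (c : Fq))) = χ (constUnits Fq _ c) :=
    charVal_units χ (constUnits Fq _ c)
  have hone (a : Fq) : charVal χ (Ideal.Quotient.mk _ (1 + C a * X ^ (n + 1))) =
      χ (oneAddXPowUnits Fq n (.ofAdd a)) := by
    rw [← charVal_units, val_oneAddXPowUnits]
    rfl
  simp only [MonoidHom.range_le_ker_iff, DFunLike.ext_iff, MonoidHom.comp_apply,
    MonoidHom.one_apply, IsPrimitiveEven, not_forall, hone, ne_eq, Units.val_eq_one]
  refine and_congr ⟨fun h c => ?_, fun h a ha => ?_⟩ Multiplicative.ofAdd.exists_congr_left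
  · simpa [hconst] using h c c.ne_zero
  · simpa [h] using hconst (Units.mk0 a ha)

end Positive

end ModRing

theorem stmt_12 (Fq : Type) [Field Fq] [Fintype Fq] (q : ℕ) (hq : q = Fintype.card Fq)
    (m : ℕ) (hm : 1 ≤ m) :
    Nat.card {χ : (ModRing Fq m)ˣ →* ℂˣ // IsPrimitiveEven Fq m χ} =
      q ^ m - q ^ (m - 1) := by
  obtain ⟨n, rfl⟩ := Nat.exists_eq_add_of_le' hm
  rw [Nat.card_congr (Equiv.subtypeEquivRight ModRing.isPrimitiveEven_iff)]
  rw [card_monoidHom_units_le_ker_and_not_le_ker (G := (ModRing Fq (n + 1))ˣ),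
    ModRing.index_range_constUnits,
    ModRing.index_range_constUnits_sup_range_oneAddXPowUnits, hq, Nat.card_eq_fintype_card,
    Nat.add_sub_cancel]
end

section
/- Let κ be a field, let n ≥ m ≥ 1 be integers, and let (λ_1,…,λ_m) ∈ κ^m be a nonzero tuple. Let F ∈ κ[x_1,…,x_n] be the coefficient of u^m in the polynomial (Σ_{r=1}^m λ_r u^{m−r}) · ∏_{i=1}^n (1 − u·x_i), regarded as a polynomial in u with coefficients in κ[x_1,…,x_n]. If (α_1,…,α_n) ∈ κ^n is a point at which all n partial derivatives ∂F/∂x_j vanish, then the set {α_1,…,α_n} has at most m−1 elements. -/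
/-!
Put `A = ∏ i (1 - u x_i)` and `g = ∑ r λ_r u^(m-1-r)`, a nonzero polynomial of degree `< m`.
Differentiating coefficientwise, `∂F/∂x_j = -[u^(m-1)] (g · ∏_{i ≠ j} (1 - u x_i))`, so at a
singular point `α` the coefficient of `u^(m-1)` in `g · A(α) / (1 - α_j u)` vanishes for every `j`.
Expanding `1 / (1 - α_j u)` as a geometric series, that coefficient is `C(α_j)` with
`C(t) = ∑_{k < m} c_{m-1-k} t^k`, where `c` are the coefficients of `g · A(α)`. If `α` took `m`
distinct values, `C` would vanish, i.e. `g · A(α) ≡ 0 mod u^m`; but `A(α)` has constant term `1`,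
so the lowest nonzero coefficient of `g`, which sits in degree `< m`, survives in `g · A(α)`.
-/

open Finset Polynomial

namespace Polynomial

section Semiring

variable {R : Type*} [Semiring R]

/-- The reversed truncation `∑_{k ≤ d} q_{d-k} X^k` of `q`, written in Horner form. -/
noncomputable def revTrunc (q : R[X]) : ℕ → R[X]
  | 0 => C (q.coeff 0)
  | d + 1 => C (q.coeff (d + 1)) + X * q.revTrunc d

theorem natDegree_revTrunc_le (q : R[X]) (d : ℕ) : (q.revTrunc d).natDegree ≤ d := by
  induction d with
  | zero => simp [revTrunc]
  | succ d ih =>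
    refine natDegree_add_le_of_degree_le (by simp) ((natDegree_mul_le).trans ?_)
    grw [natDegree_X_le, ih, add_comm]

theorem coeff_eq_zero_of_revTrunc_eq_zero {q : R[X]} {d : ℕ} (h : q.revTrunc d = 0) {s : ℕ}
    (hs : s ≤ d) : q.coeff s = 0 := by
  induction d with
  | zero => simpa [revTrunc, Nat.le_zero.mp hs] using h
  | succ d ih =>
    have h0 := congr_arg (coeff · 0) h
    simp only [revTrunc, coeff_add, coeff_C_zero, coeff_X_mul_zero, add_zero, coeff_zero] at h0
    rcases hs.lt_or_eq with hs | rfl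
    · refine ih ?_ (Nat.le_of_lt_succ hs)
      ext k
      simpa [revTrunc, coeff_X_mul] using congr_arg (coeff · (k + 1)) h
    · exact h0

theorem coeff_mul_natTrailingDegree_ne_zero [NoZeroDivisors R] {g a : R[X]} (hg : g ≠ 0)
    (ha : a.coeff 0 ≠ 0) : (g * a).coeff g.natTrailingDegree ≠ 0 := by
  have := coeff_mul_natTrailingDegree_add_natTrailingDegree (p := g) (q := a)
  rw [natTrailingDegree_eq_zero.mpr (.inr ha), add_zero, trailingCoeff_eq_coeff_zero ha] at this
  rw [this]
  exact mul_ne_zero (trailingCoeff_nonzero_iff_nonzero.mpr hg) ha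

theorem coeff_sum_C_mul_X_pow_sub {m : ℕ} (f : Fin m → R) (r : Fin m) :
    (∑ s : Fin m, C (f s) * X ^ (m - 1 - (s : ℕ))).coeff (m - 1 - r) = f r := by
  rw [finsetSum_coeff, sum_eq_single r (fun s _ hsr ↦ ?_) (by simp)]
  · simp
  · rw [coeff_C_mul_X_pow, if_neg]
    exact fun h ↦ hsr (Fin.ext (by omega))

theorem sum_C_mul_X_pow_sub_ne_zero {m : ℕ} {f : Fin m → R} (hf : f ≠ 0) :
    ∑ s : Fin m, C (f s) * X ^ (m - 1 - (s : ℕ)) ≠ 0 := by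
  obtain ⟨r, hr⟩ := Function.ne_iff.mp hf
  exact fun h ↦ hr (by simpa [h] using (coeff_sum_C_mul_X_pow_sub f r).symm)

theorem natDegree_sum_C_mul_X_pow_sub_le {m : ℕ} (f : Fin m → R) :
    (∑ s : Fin m, C (f s) * X ^ (m - 1 - (s : ℕ))).natDegree ≤ m - 1 :=
  natDegree_sum_le_of_forall_le _ _ fun _ _ ↦ (natDegree_C_mul_X_pow_le _ _).trans (Nat.sub_le _ _)

end Semiring

section CommRing

variable {R : Type*} [CommRing R]

theorem eval_revTrunc_one_sub_X_mul_C_mul (β : R) (h : R[X]) (d : ℕ) :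
    (((1 - X * C β) * h).revTrunc d).eval β = h.coeff d := by
  induction d with
  | zero => simp [revTrunc, mul_coeff_zero]
  | succ d ih =>
    simp only [revTrunc, eval_add, eval_C, eval_mul, eval_X, ih]
    simp [sub_mul, mul_assoc, coeff_X_mul]

theorem card_image_le_of_coeff_mul_prod_erase_eq_zero [IsDomain R] [DecidableEq R] {ι : Type*}
    [Fintype ι] [DecidableEq ι] {g : R[X]} (hg : g ≠ 0) {d : ℕ} (hgd : g.natDegree ≤ d) (α : ι → R)
    (h : ∀ j, (g * ∏ i ∈ univ.erase j, (1 - X * C (α i))).coeff d = 0) :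
    #(univ.image α) ≤ d := by
  set q := g * ∏ i, (1 - X * C (α i))
  have hroot : ∀ b ∈ univ.image α, (q.revTrunc d).eval b = 0 := by
    simp only [mem_image, mem_univ, true_and, forall_exists_index, forall_apply_eq_imp_iff]
    intro j
    rw [← h j, ← eval_revTrunc_one_sub_X_mul_C_mul, mul_left_comm,
      mul_prod_erase univ (fun i ↦ 1 - X * C (α i)) (mem_univ j)]
  by_contra! hcard
  have hzero : q.revTrunc d = 0 := eq_zero_of_natDegree_lt_card_of_eval_eq_zero' _ _ hroot
    ((natDegree_revTrunc_le q d).trans_lt hcard)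
  refine coeff_mul_natTrailingDegree_ne_zero hg ?_
    (coeff_eq_zero_of_revTrunc_eq_zero hzero ((natTrailingDegree_le_natDegree g).trans hgd))
  simp [coeff_zero_eq_eval_zero, eval_prod]

end CommRing

end Polynomial

namespace MvPolynomial

variable {R σ : Type*} [CommRing R]

noncomputable def pderivCoeffs (i : σ) :
    Derivation R (MvPolynomial σ R)[X] (MvPolynomial σ R)[X] :=
  PolynomialModule.equivPolynomialSelf.compDer (pderiv i).mapCoeffs

@[simp]
theorem coeff_pderivCoeffs (i : σ) (p : (MvPolynomial σ R)[X]) (k : ℕ) :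
    (pderivCoeffs i p).coeff k = pderiv i (p.coeff k) :=
  rfl

theorem pderivCoeffs_map_C (i : σ) (p : R[X]) : pderivCoeffs i (p.map C) = 0 := by
  ext
  simp

theorem pderivCoeffs_C (i : σ) (a : MvPolynomial σ R) :
    pderivCoeffs i (Polynomial.C a) = Polynomial.C (pderiv i a) := by
  ext k
  simp [Polynomial.coeff_C, apply_ite (pderiv i)]

theorem pderivCoeffs_X (i : σ) : pderivCoeffs i (Polynomial.X : (MvPolynomial σ R)[X]) = 0 := by
  ext k
  simp [Polynomial.coeff_X, apply_ite (pderiv i)]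

theorem pderivCoeffs_prod_one_sub_X_mul_C_X [Fintype σ] [DecidableEq σ] (i : σ) :
    pderivCoeffs i (∏ j, (1 - Polynomial.X * Polynomial.C (X j)) : (MvPolynomial σ R)[X]) =
      -(Polynomial.X * ∏ j ∈ univ.erase i, (1 - Polynomial.X * Polynomial.C (X j))) := by
  have hfactor (j : σ) : pderivCoeffs i (1 - Polynomial.X * Polynomial.C (X j)) =
      -(Polynomial.X * Polynomial.C (Pi.single i 1 j) : (MvPolynomial σ R)[X]) := by
    simp [pderivCoeffs_C, pderivCoeffs_X]
  have hrest : pderivCoeffs i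
      (∏ j ∈ univ.erase i, (1 - Polynomial.X * Polynomial.C (X j)) : (MvPolynomial σ R)[X]) = 0 :=
    prod_induction _ (fun p ↦ pderivCoeffs i p = 0) (fun a b ha hb ↦ by simp [ha, hb])
      (Derivation.map_one_eq_zero _)
      (fun j hj ↦ by rw [hfactor, Pi.single_eq_of_ne (ne_of_mem_erase hj)]; simp)
  rw [← mul_prod_erase univ _ (mem_univ i), Derivation.leibniz, hrest, hfactor,
    Pi.single_eq_same, map_one, mul_one, smul_zero, zero_add, smul_eq_mul]
  ring

theorem eval_pderiv_coeff_map_C_mul_prod [Fintype σ] [DecidableEq σ] (p : R[X]) (α : σ → R)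
    (i : σ) (d : ℕ) :
    eval α (pderiv i ((p.map C * ∏ j, (1 - Polynomial.X * Polynomial.C (X j))).coeff (d + 1))) =
      -(p * ∏ j ∈ univ.erase i, (1 - Polynomial.X * Polynomial.C (α j))).coeff d := by
  rw [← coeff_pderivCoeffs, Derivation.leibniz, pderivCoeffs_map_C, smul_zero, add_zero,
    pderivCoeffs_prod_one_sub_X_mul_C_X, smul_eq_mul, ← Polynomial.coeff_map]
  have heval_C : (eval α).comp C = RingHom.id R := RingHom.ext fun _ ↦ eval_C _
  simp [Polynomial.map_prod, Polynomial.map_map, heval_C, mul_left_comm _ Polynomial.X,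
    Polynomial.coeff_X_mul]

end MvPolynomial

open Classical in
theorem stmt_14_general (κ : Type) [Field κ] (n m : ℕ)
    (lam : Fin m → κ) (hlam : lam ≠ 0)
    (F : MvPolynomial (Fin n) κ)
    (hF : F =
      Polynomial.coeff
        ((∑ r : Fin m,
            Polynomial.C (MvPolynomial.C (lam r)) * Polynomial.X ^ (m - 1 - (r : ℕ))) *
          ∏ i : Fin n, (1 - Polynomial.X * Polynomial.C (MvPolynomial.X i)))
        m)
    (α : Fin n → κ)
    (hα : ∀ j : Fin n, MvPolynomial.eval α (MvPolynomial.pderiv j F) = 0) :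
    (Finset.univ.image α).card ≤ m - 1 := by
  obtain ⟨r, -⟩ := Function.ne_iff.mp hlam
  have hm : m - 1 + 1 = m := Nat.sub_add_cancel r.pos
  have hP : ∑ r : Fin m, Polynomial.C (MvPolynomial.C (lam r)) * Polynomial.X ^ (m - 1 - (r : ℕ)) =
      (∑ r : Fin m, C (lam r) * X ^ (m - 1 - (r : ℕ))).map
        (MvPolynomial.C : κ →+* MvPolynomial (Fin n) κ) := by
    simp [Polynomial.map_sum]
  refine card_image_le_of_coeff_mul_prod_erase_eq_zero (sum_C_mul_X_pow_sub_ne_zero hlam)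
    (natDegree_sum_C_mul_X_pow_sub_le lam) α fun j ↦ neg_eq_zero.mp ?_
  rw [← MvPolynomial.eval_pderiv_coeff_map_C_mul_prod, hm, ← hP, ← hF]
  exact hα j

open Classical in
theorem stmt_14 (κ : Type) [Field κ] (n m : ℕ) (hm : 1 ≤ m) (hmn : m ≤ n)
    (lam : Fin m → κ) (hlam : lam ≠ 0)
    (F : MvPolynomial (Fin n) κ)
    (hF : F =
      Polynomial.coeff
        ((∑ r : Fin m,
            Polynomial.C (MvPolynomial.C (lam r)) * Polynomial.X ^ (m - 1 - (r : ℕ))) *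
          ∏ i : Fin n, (1 - Polynomial.X * Polynomial.C (MvPolynomial.X i)))
        m)
    (α : Fin n → κ)
    (hα : ∀ j : Fin n, MvPolynomial.eval α (MvPolynomial.pderiv j F) = 0) :
    (Finset.univ.image α).card ≤ m - 1 :=
  stmt_14_general κ n m lam hlam F hF α hα
end

section
/- Let κ be a field, let n ≥ 1 and m ≥ 1 be integers, and let a_1,…,a_n ∈ κ be elements such that the set {a_1,…,a_n} has at most m−1 elements. Let P(u) = ∏_{i=1}^n (1 − u·a_i) ∈ κ[u]. If the coefficients of u, u^2, …, u^m in P all vanish (that is, P ≡ 1 mod u^{m+1}), then the formal derivative P′ of P is identically zero. In particular, if κ has characteristic zero, then a_i = 0 for all i. -/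
/-!
Write `P = ∏ᵢ (1 - aᵢ X)`. Since `P ≡ 1 mod X^(m+1)`, each cofactor `P / (1 - aᵢ X)` agrees with
the geometric series `∑ aᵢ^k X^k` up to degree `m`, so comparing coefficients of
`P' = -∑ᵢ aᵢ · P / (1 - aᵢ X)` gives the power sums `∑ᵢ aᵢ^k = 0` for `1 ≤ k ≤ m`. Grouping equal
`aᵢ`, with `c_b` the multiplicity of the value `b`, these read `∑_b (c_b b) b^k = 0` for
`0 ≤ k < #{distinct values} ≤ m - 1`, and the Vandermonde matrix of the distinct values is
invertible, so `c_b b = 0` for every `b`. Then each factor `(1 - bX)^(c_b)` of `P` has derivative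
`-c_b b (1 - bX)^(c_b - 1) = 0`.
-/

open Polynomial Finset

theorem Finset.eq_zero_of_forall_sum_mul_pow_eq_zero {R : Type*} [CommRing R] [IsDomain R]
    (S : Finset R) (w : R → R) (h : ∀ k < #S, ∑ b ∈ S, w b * b ^ k = 0) :
    ∀ b ∈ S, w b = 0 := by
  let e := S.equivFin.symm
  have hv := Matrix.eq_zero_of_forall_pow_sum_mul_pow_eq_zero (f := fun i => (e i : R))
    (v := fun i => w (e i)) (Subtype.val_injective.comp e.injective) fun i => by
      rw [← h i i.isLt, ← sum_coe_sort S]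
      exact e.sum_comp fun b : S => w b * (b : R) ^ (i : ℕ)
  intro b hb
  simpa [e] using congrFun hv (e.symm ⟨b, hb⟩)

theorem card_filter_mul_eq_zero_of_sum_pow_eq_zero {ι R : Type*} [CommRing R] [IsDomain R]
    [DecidableEq R] {s : Finset ι} {a : ι → R}
    (h : ∀ k, 1 ≤ k → k ≤ #(s.image a) → ∑ i ∈ s, a i ^ k = 0) :
    ∀ b ∈ s.image a, (#{i ∈ s | a i = b} : R) * b = 0 := by
  refine (s.image a).eq_zero_of_forall_sum_mul_pow_eq_zero _ fun k hk => ?_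
  rw [← h (k + 1) (by omega) hk, Finset.sum_comp (· ^ (k + 1)) a]
  exact sum_congr rfl fun b _ => by rw [nsmul_eq_mul, pow_succ', mul_assoc]

namespace Polynomial

variable {R : Type*} [CommRing R]

theorem coeff_eq_pow_of_eq_one_sub_X_mul_C_mul {P Q : R[X]} {b : R} {m : ℕ}
    (hPQ : P = (1 - X * C b) * Q) (hP : ∀ j ≤ m, P.coeff j = (1 : R[X]).coeff j) :
    ∀ k ≤ m, Q.coeff k = b ^ k := by
  have hrec : Q = P + X * (C b * Q) := by rw [hPQ]; ring
  intro k
  induction k with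
  | zero =>
    intro hm
    rw [hrec, coeff_add, coeff_X_mul_zero, hP 0 hm]
    simp
  | succ k ih =>
    intro hk
    rw [hrec, coeff_add, coeff_X_mul, coeff_C_mul, hP (k + 1) hk, ih (by omega), coeff_one,
      if_neg k.succ_ne_zero, zero_add, pow_succ, mul_comm]

theorem derivative_prod_one_sub_X_mul_C {ι : Type*} [DecidableEq ι] (s : Finset ι) (a : ι → R) :
    derivative (∏ i ∈ s, (1 - X * C (a i))) =
      -∑ i ∈ s, C (a i) * ∏ j ∈ s.erase i, (1 - X * C (a j)) := by
  rw [derivative_prod_finset, ← sum_neg_distrib]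
  refine sum_congr rfl fun i _ => ?_
  rw [derivative_sub, derivative_one, derivative_mul, derivative_X, derivative_C]
  ring

theorem sum_pow_eq_zero_of_coeff_prod_one_sub_X_mul_C_eq_zero {ι : Type*} [DecidableEq ι]
    {s : Finset ι} {a : ι → R} {m : ℕ}
    (hcoeff : ∀ j, 1 ≤ j → j ≤ m → (∏ i ∈ s, (1 - X * C (a i))).coeff j = 0) :
    ∀ k, 1 ≤ k → k ≤ m → ∑ i ∈ s, a i ^ k = 0 := by
  set P := ∏ i ∈ s, (1 - X * C (a i))
  have hP : ∀ j ≤ m, P.coeff j = (1 : R[X]).coeff j := by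
    intro j hj
    rcases Nat.eq_zero_or_pos j with rfl | hj0
    · rw [coeff_zero_eq_eval_zero, eval_prod]
      simp
    · rw [hcoeff j hj0 hj, coeff_one, if_neg hj0.ne']
  intro k hk1 hkm
  obtain ⟨j, rfl⟩ := Nat.exists_eq_add_of_le' hk1
  have hcofactor : ∀ i ∈ s, (∏ l ∈ s.erase i, (1 - X * C (a l))).coeff j = a i ^ j :=
    fun i hi => coeff_eq_pow_of_eq_one_sub_X_mul_C_mul
      (mul_prod_erase s (fun l => 1 - X * C (a l)) hi).symm hP j (by omega)
  have hder : (derivative P).coeff j = 0 := by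
    rw [coeff_derivative, hcoeff (j + 1) hk1 hkm, zero_mul]
  rw [derivative_prod_one_sub_X_mul_C, coeff_neg, finsetSum_coeff, neg_eq_zero] at hder
  rw [← hder]
  refine sum_congr rfl fun i hi => ?_
  rw [coeff_C_mul, hcofactor i hi, pow_succ']

theorem derivative_one_sub_X_mul_C_pow_eq_zero {b : R} {c : ℕ} (h : (c : R) * b = 0) :
    derivative ((1 - X * C b) ^ c) = 0 := by
  rw [derivative_pow, derivative_sub, derivative_one, derivative_mul, derivative_X, derivative_C]
  have hcb : C (c : R) * C b = 0 := by rw [← C_mul, h, C_0]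
  linear_combination (-(1 - X * C b) ^ (c - 1)) * hcb

theorem derivative_prod_one_sub_X_mul_C_eq_zero {ι : Type*} [DecidableEq R] {s : Finset ι}
    {a : ι → R} (h : ∀ b ∈ s.image a, (#{i ∈ s | a i = b} : R) * b = 0) :
    derivative (∏ i ∈ s, (1 - X * C (a i))) = 0 := by
  rw [Finset.prod_comp (fun b => 1 - X * C b) a, derivative_prod_finset]
  exact sum_eq_zero fun b hb => by rw [derivative_one_sub_X_mul_C_pow_eq_zero (h b hb), mul_zero]

end Polynomial

open Classical in
theorem stmt_15_general (κ : Type) [Field κ] (n m : ℕ)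
    (a : Fin n → κ) (ha : (Finset.univ.image a).card ≤ m - 1)
    (P : Polynomial κ)
    (hP : P = ∏ i : Fin n, (1 - Polynomial.X * Polynomial.C (a i)))
    (hcoeff : ∀ j : ℕ, 1 ≤ j → j ≤ m → P.coeff j = 0) :
    Polynomial.derivative P = 0 ∧ (CharZero κ → ∀ i, a i = 0) := by
  subst hP
  have hpow := sum_pow_eq_zero_of_coeff_prod_one_sub_X_mul_C_eq_zero hcoeff
  have hfiber := card_filter_mul_eq_zero_of_sum_pow_eq_zero fun k hk1 hk => hpow k hk1 (by omega)
  refine ⟨derivative_prod_one_sub_X_mul_C_eq_zero hfiber, fun _ i => ?_⟩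
  have hcard : #{j | a j = a i} ≠ 0 := card_ne_zero.mpr ⟨i, by simp⟩
  exact (mul_eq_zero.mp (hfiber _ (mem_image_of_mem a (mem_univ i)))).resolve_left
    (Nat.cast_ne_zero.mpr hcard)

open Classical in
theorem stmt_15 (κ : Type) [Field κ] (n m : ℕ) (hn : 1 ≤ n) (hm : 1 ≤ m)
    (a : Fin n → κ) (ha : (Finset.univ.image a).card ≤ m - 1)
    (P : Polynomial κ)
    (hP : P = ∏ i : Fin n, (1 - Polynomial.X * Polynomial.C (a i)))
    (hcoeff : ∀ j : ℕ, 1 ≤ j → j ≤ m → P.coeff j = 0) :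
    Polynomial.derivative P = 0 ∧ (CharZero κ → ∀ i, a i = 0) :=
  stmt_15_general κ n m a ha P hP hcoeff
end

section
/- Let 𝔽_q be a finite field, let f ∈ 𝔽_q[T] be a monic squarefree polynomial of degree n ≥ 1, let S ⊆ 𝔽̄_q be the set of roots of f in a fixed algebraic closure 𝔽̄_q (so |S| = n), and let σ : S → S be the permutation x ↦ x^q (it is well defined and bijective since Frobenius permutes the roots of f). Then μ(f) = (−1)^n · sign(σ), where sign(σ) denotes the sign of the permutation σ. -/
/-!
Both sides are multiplicative over a factorisation `f = g * h` into coprime factors: for `μ`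
because the irreducible factors add up, and for the sign because the roots of `g * h` split into
the Frobenius-stable root sets of `g` and of `h`. For irreducible `f` of degree `d`, a root `x`
satisfies `x ^ q ^ m = x` iff `d ∣ m`, so Frobenius permutes the `d` roots as one `d`-cycle, of
sign `(-1) ^ (d - 1)`, and both sides equal `-1`.
-/

open Polynomial

open Classical in
/-- The function-field Möbius function: `(-1)^r` if `f` is squarefree with `r`
monic irreducible factors, and `0` otherwise. -/
noncomputable def ffMoebius {Fq : Type} [Field Fq] (f : Fq[X]) : ℤ :=
  if Squarefree f then (-1) ^ Multiset.card (UniqueFactorizationMonoid.factors f) else 0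

namespace Equiv.Perm

variable {α : Type*} [DecidableEq α]

theorem sign_subtypePerm_of_eq_union (ψ : Perm α) {s t u : Finset α}
    (hs : ∀ x, ψ x ∈ s ↔ x ∈ s) (ht : ∀ x, ψ x ∈ t ↔ x ∈ t) (hu : ∀ x, ψ x ∈ u ↔ x ∈ u)
    (hstu : s = t ∪ u) (htu : _root_.Disjoint t u) :
    sign (ψ.subtypePerm hs) = sign (ψ.subtypePerm ht) * sign (ψ.subtypePerm hu) := by
  subst hstu
  rw [← sign_sumCongr]
  refine (sign_eq_sign_of_equiv _ _ (Equiv.Finset.union t u htu) ?_).symm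
  rintro (x | x) <;> rfl

theorem sign_eq_of_pow_apply_eq_self_iff [Fintype α] (σ : Perm α) (x : α)
    (hx : ∀ m : ℕ, (σ ^ m) x = x ↔ Fintype.card α ∣ m) :
    sign σ = (-1) ^ (Fintype.card α - 1) := by
  set n := Fintype.card α
  have pow_mod_apply (m : ℕ) : (σ ^ (m % n)) x = (σ ^ m) x := by
    conv_rhs => rw [← Nat.mod_add_div m n, pow_add, mul_apply, (hx _).2 (dvd_mul_right n _)]
  have orbit_injective : Function.Injective fun i : Fin n => (σ ^ (i : ℕ)) x := by
    intro i j hij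
    wlog hle : i ≤ j generalizing i j
    · exact (this hij.symm (le_of_not_ge hle)).symm
    have hji : (σ ^ ((j : ℕ) - i)) x = x := by
      apply (σ ^ (i : ℕ)).injective
      simp only [← mul_apply, ← pow_add, Nat.add_sub_cancel' (Fin.le_def.1 hle)]
      exact hij.symm
    have := Nat.eq_zero_of_dvd_of_lt ((hx _).1 hji) (by omega)
    exact Fin.ext (by omega)
  let e : Fin n ≃ α := Equiv.ofBijective _
    ((Fintype.bijective_iff_injective_and_card _).2 ⟨orbit_injective, Fintype.card_fin n⟩)
  rw [← sign_finRotate]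
  refine (sign_eq_sign_of_equiv _ _ e fun i => ?_).symm
  have : NeZero n := ⟨by have := i.pos; omega⟩
  simp only [e, ofBijective_apply, finRotate_apply, Fin.val_add, Fin.val_one', Nat.add_mod_mod,
    pow_mod_apply, pow_succ', mul_apply]

end Equiv.Perm

section Frobenius

open FiniteField Equiv.Perm

variable {Fq L : Type*} [Field Fq] [Field L] [Algebra Fq L]

theorem card_rootFinset_of_separable_of_splits [DecidableEq L] {f : Fq[X]} (hsep : f.Separable)
    (hsplit : (f.map (algebraMap Fq L)).Splits) :
    Fintype.card {x : L // x ∈ (f.aroots L).toFinset} = f.natDegree := by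
  rw [Fintype.card_coe, Multiset.toFinset_card_of_nodup (nodup_roots hsep.map),
    ← hsplit.natDegree_eq_card_roots, natDegree_map]

variable [Fintype Fq]

theorem Irreducible.pow_card_pow_eq_self_iff {f : Fq[X]} (hf : Irreducible f) {x : L}
    (hx : aeval x f = 0) (m : ℕ) : x ^ Fintype.card Fq ^ m = x ↔ f.natDegree ∣ m := by
  rw [hf.natDegree_dvd_iff_dvd_X_pow_card_pow_sub_X, ← hf.dvd_iff_aeval_eq_zero hx,
    Nat.card_eq_fintype_card]
  simp [sub_eq_zero]

variable [Algebra.IsAlgebraic Fq L] [DecidableEq L]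

theorem frobeniusAlgEquivOfAlgebraic_mem_rootFinset_iff (f : Fq[X]) (x : L) :
    frobeniusAlgEquivOfAlgebraic Fq L x ∈ (f.aroots L).toFinset ↔ x ∈ (f.aroots L).toFinset := by
  simp only [Multiset.mem_toFinset, mem_aroots, aeval_algHom_apply, EmbeddingLike.map_eq_zero_iff]

variable (L) in
noncomputable def frobeniusRootPerm (f : Fq[X]) : Equiv.Perm {x : L // x ∈ (f.aroots L).toFinset} :=
  Equiv.Perm.subtypePerm (frobeniusAlgEquivOfAlgebraic Fq L).toEquiv
    (frobeniusAlgEquivOfAlgebraic_mem_rootFinset_iff f)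

theorem frobeniusRootPerm_pow_apply (f : Fq[X]) (m : ℕ) (x : {x : L // x ∈ (f.aroots L).toFinset}) :
    ((frobeniusRootPerm L f ^ m) x : L) = (x : L) ^ Fintype.card Fq ^ m := by
  rw [frobeniusRootPerm, subtypePerm_pow, subtypePerm_apply, Subtype.coe_mk, coe_pow]
  exact congrFun (coe_frobeniusAlgEquivOfAlgebraic_iterate Fq L m) x

theorem sign_frobeniusRootPerm_mul {g h : Fq[X]} (hgh : IsCoprime g h) (h0 : g * h ≠ 0) :
    sign (frobeniusRootPerm L (g * h)) =
      sign (frobeniusRootPerm L g) * sign (frobeniusRootPerm L h) := by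
  refine sign_subtypePerm_of_eq_union _ _ _ _ (by rw [aroots_mul h0, Multiset.toFinset_add]) ?_
  refine Finset.disjoint_left.2 fun x hxg hxh => ?_
  obtain ⟨u, v, huv⟩ := hgh
  simp only [Multiset.mem_toFinset, mem_aroots] at hxg hxh
  simpa [hxg.2, hxh.2] using congrArg (aeval x) huv

theorem sign_frobeniusRootPerm_of_irreducible {f : Fq[X]} (hf : Irreducible f)
    (hsplit : (f.map (algebraMap Fq L)).Splits) :
    sign (frobeniusRootPerm L f) = (-1) ^ (f.natDegree - 1) := by
  have hcard := card_rootFinset_of_separable_of_splits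
    (PerfectField.separable_of_irreducible hf) hsplit
  obtain ⟨x, hx⟩ : (f.aroots L).toFinset.Nonempty := by
    rw [← Finset.card_pos, ← Fintype.card_coe, hcard]
    exact hf.natDegree_pos
  rw [← hcard]
  refine sign_eq_of_pow_apply_eq_self_iff _ ⟨x, hx⟩ fun m => ?_
  rw [hcard, ← hf.pow_card_pow_eq_self_iff (mem_aroots.1 (Multiset.mem_toFinset.1 hx)).2,
    Subtype.ext_iff, frobeniusRootPerm_pow_apply]

end Frobenius

section Moebius

variable {Fq : Type} [Field Fq]

theorem ffMoebius_of_isUnit {f : Fq[X]} (hf : IsUnit f) : ffMoebius f = 1 := by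
  rw [ffMoebius, if_pos hf.squarefree, UniqueFactorizationMonoid.factors_of_isUnit hf,
    Multiset.card_zero, pow_zero]

theorem ffMoebius_of_irreducible {f : Fq[X]} (hf : Irreducible f) : ffMoebius f = -1 := by
  rw [ffMoebius, if_pos hf.squarefree, UniqueFactorizationMonoid.card_factors_of_irreducible hf,
    pow_one]

theorem ffMoebius_mul {g h : Fq[X]} (hsf : Squarefree (g * h)) :
    ffMoebius (g * h) = ffMoebius g * ffMoebius h := by
  have hg : g ≠ 0 := left_ne_zero_of_mul hsf.ne_zero
  have hh : h ≠ 0 := right_ne_zero_of_mul hsf.ne_zero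
  rw [ffMoebius, ffMoebius, ffMoebius, if_pos hsf, if_pos hsf.of_mul_left,
    if_pos hsf.of_mul_right,
    Multiset.card_eq_card_of_rel (UniqueFactorizationMonoid.factors_mul hg hh),
    Multiset.card_add, pow_add]

open Equiv.Perm

variable [Fintype Fq] {L : Type*} [Field L] [Algebra Fq L] [Algebra.IsAlgebraic Fq L]
  [IsAlgClosed L] [DecidableEq L]

theorem ffMoebius_eq_neg_one_pow_natDegree_mul_sign {f : Fq[X]} (hsf : Squarefree f) :
    ffMoebius f = (-1) ^ f.natDegree * (sign (frobeniusRootPerm L f) : ℤ) := by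
  induction f using UniqueFactorizationMonoid.induction_on_prime with
  | h₁ => exact absurd hsf not_squarefree_zero
  | h₂ u hu =>
    obtain ⟨c, -, rfl⟩ := Polynomial.isUnit_iff.1 hu
    have : IsEmpty {x : L // x ∈ ((C c).aroots L).toFinset} := ⟨fun x => by simpa using x.2⟩
    rw [ffMoebius_of_isUnit hu, natDegree_C, Subsingleton.elim (frobeniusRootPerm L (C c)) 1]
    simp
  | h₃ a p ha hp ih =>
    have hpa : ¬p ∣ a := fun hdvd => hp.not_isUnit (hsf p (mul_dvd_mul_left p hdvd))
    have hcop : IsCoprime p a := hp.irreducible.coprime_iff_not_dvd.2 hpa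
    obtain ⟨k, hk⟩ := Nat.exists_eq_add_of_lt hp.irreducible.natDegree_pos
    rw [ffMoebius_mul hsf, ffMoebius_of_irreducible hp.irreducible, ih hsf.of_mul_right,
      natDegree_mul hp.ne_zero ha, sign_frobeniusRootPerm_mul hcop (mul_ne_zero hp.ne_zero ha),
      sign_frobeniusRootPerm_of_irreducible hp.irreducible (IsAlgClosed.splits _), hk]
    push_cast
    ring_nf
    simp

end Moebius

open Classical in
theorem stmt_16_general (Fq : Type) [Field Fq] [Fintype Fq] (q : ℕ) (hq : q = Fintype.card Fq)
    (n : ℕ) (f : Fq[X]) (hfn : f.natDegree = n)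
    (hsf : Squarefree f)
    (σ : Equiv.Perm {x : AlgebraicClosure Fq // x ∈ (f.aroots (AlgebraicClosure Fq)).toFinset})
    (hσ : ∀ x, ((σ x : AlgebraicClosure Fq)) = (x : AlgebraicClosure Fq) ^ q) :
    ffMoebius f = (-1) ^ n * (Equiv.Perm.sign σ : ℤ) := by
  subst hq hfn
  obtain rfl : σ = frobeniusRootPerm _ f := Equiv.ext fun x => Subtype.ext (hσ x)
  exact ffMoebius_eq_neg_one_pow_natDegree_mul_sign hsf

open Classical in
theorem stmt_16 (Fq : Type) [Field Fq] [Fintype Fq] (q : ℕ) (hq : q = Fintype.card Fq)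
    (n : ℕ) (hn : 1 ≤ n) (f : Fq[X]) (hf : f.Monic) (hfn : f.natDegree = n)
    (hsf : Squarefree f)
    (σ : Equiv.Perm {x : AlgebraicClosure Fq // x ∈ (f.aroots (AlgebraicClosure Fq)).toFinset})
    (hσ : ∀ x, ((σ x : AlgebraicClosure Fq)) = (x : AlgebraicClosure Fq) ^ q) :
    ffMoebius f = (-1) ^ n * (Equiv.Perm.sign σ : ℤ) :=
  stmt_16_general Fq q hq n f hfn hsf σ hσ
end

section
/- Let 𝔽_q be a finite field, let f ∈ 𝔽_q[T] be a monic polynomial of degree n ≥ 1, let S ⊆ 𝔽̄_q be the (finite, nonempty) set of distinct roots of f in a fixed algebraic closure 𝔽̄_q, and let σ : S → S be the permutation x ↦ x^q. Let W be the ℂ-vector space of functions g : S → ℂ with Σ_{x∈S} g(x) = 0, and let T_σ : W → W be the linear automorphism g ↦ g ∘ σ. Then Λ(f) = det(id_W − T_σ). -/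
/-!
The Frobenius `x ↦ x ^ q` permutes the roots of `f`, and its orbits are exactly the root sets of
the distinct monic irreducible factors of `f` (its powers act on the roots of an irreducible `π`
of degree `d` through the cyclic group `Gal(𝔽_q⟮x⟯/𝔽_q)` of order `d`). So `σ` is transitive
precisely when `f` is a prime power `π ^ r`, and then `#S = deg π`.

On the sum-zero functions, a transitive `σ` of length `m` gives an operator `T` with
`1 + T + ⋯ + T ^ (m - 1) = 0` and a cyclic vector, so its characteristic polynomial is
`1 + X + ⋯ + X ^ (m - 1)` and `det (1 - T) = m`. If `σ` has two cycles, the indicator of one of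
them minus its mean is a nonzero fixed vector, so `det (1 - T) = 0`.
-/

open Polynomial

open Classical in
/-- The function-field von Mangoldt function: `deg π` if `f = π ^ r` with `π` monic
irreducible and `r ≥ 1`, and `0` otherwise.  (The monic irreducible `π` is unique
when it exists, so `Classical.choose` picks it out.) -/
noncomputable def ffVonMangoldt {Fq : Type} [Field Fq] (f : Fq[X]) : ℕ :=
  if h : ∃ π : Fq[X], (π.Monic ∧ Irreducible π) ∧ ∃ r : ℕ, 1 ≤ r ∧ f = π ^ r then
    (Classical.choose h).natDegree
  else 0

open Function Equiv IntermediateField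

theorem LinearMap.charpoly_eq_of_linearIndependent_pow {K M : Type*} [Field K] [AddCommGroup M]
    [Module K M] [FiniteDimensional K M] {f : Module.End K M} {p : K[X]} {n : ℕ}
    (hp : p.Monic) (hfp : aeval f p = 0) (hpn : p.natDegree = n)
    (hMn : Module.finrank K M = n) (hind : LinearIndependent K fun i : Fin n ↦ f ^ (i : ℕ)) :
    f.charpoly = p := by
  have hmin : minpoly K f = p :=
    minpoly.eq_of_linearIndependent K f hp hfp n (by rw [degree_eq_natDegree hp.ne_zero, hpn]) hind
  rw [← hmin]
  refine (eq_of_monic_of_dvd_of_natDegree_le (minpoly.monic (Algebra.IsIntegral.isIntegral f))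
    f.charpoly_monic (LinearMap.minpoly_dvd_charpoly f) ?_)
  rw [LinearMap.charpoly_natDegree, hmin, hpn, hMn]

theorem Polynomial.natDegree_geom_sum_X {R : Type*} [Semiring R] [Nontrivial R] (n : ℕ) :
    (∑ i ∈ Finset.range (n + 1), (X : R[X]) ^ i).natDegree = n := by
  refine natDegree_eq_of_le_of_coeff_ne_zero ?_ ?_
  · exact natDegree_sum_le_of_forall_le _ _ fun i hi ↦
      (natDegree_X_pow_le i).trans (Nat.lt_succ_iff.mp (Finset.mem_range.mp hi))
  · simp [coeff_X_pow]

namespace Equiv.Perm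

variable {S : Type*} [Fintype S] {σ : Perm S}

theorem minimalPeriod_eq_card_of_forall_sameCycle (hσ : ∀ x y, σ.SameCycle x y) (x : S) :
    minimalPeriod σ x = Fintype.card S := by
  have hpos : 0 < minimalPeriod σ x :=
    minimalPeriod_pos_of_mem_periodicPts (σ.injective.mem_periodicPts x)
  have horbit : Bijective fun i : Fin (minimalPeriod σ x) ↦ (σ ^ (i : ℕ)) x := by
    refine ⟨fun i j hij ↦ Fin.ext (iterate_injOn_Iio_minimalPeriod i.2 j.2 ?_), fun y ↦ ?_⟩
    · simpa only [coe_pow] using hij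
    · obtain ⟨i, rfl⟩ := (hσ x y).exists_nat_pow_eq
      exact ⟨⟨i % minimalPeriod σ x, Nat.mod_lt _ hpos⟩, by
        simp only [coe_pow, iterate_mod_minimalPeriod_eq]⟩
  simpa using Fintype.card_of_bijective horbit

theorem injOn_pow_apply_of_forall_sameCycle (hσ : ∀ x y, σ.SameCycle x y) (x : S) :
    Set.InjOn (fun i : ℕ ↦ (σ ^ i) x) (Set.Iio (Fintype.card S)) := by
  rw [← minimalPeriod_eq_card_of_forall_sameCycle hσ x]
  simpa only [coe_pow] using iterate_injOn_Iio_minimalPeriod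

theorem pow_apply_symm_pow_apply_eq_self_iff (hσ : ∀ x y, σ.SameCycle x y) (x : S) {i j : ℕ}
    (hi : i < Fintype.card S) (hj : j < Fintype.card S) :
    (σ ^ i) ((σ ^ j).symm x) = x ↔ i = j := by
  calc (σ ^ i) ((σ ^ j).symm x) = x ↔ (σ ^ j) ((σ ^ i) ((σ ^ j).symm x)) = (σ ^ j) x :=
        (σ ^ j).injective.eq_iff.symm
    _ ↔ (σ ^ i) x = (σ ^ j) x := by
        rw [← Perm.mul_apply, pow_mul_comm, Perm.mul_apply, Equiv.apply_symm_apply]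
    _ ↔ i = j := (injOn_pow_apply_of_forall_sameCycle hσ x).eq_iff hi hj

theorem sum_range_pow_apply_of_forall_sameCycle {M : Type*} [AddCommMonoid M]
    (hσ : ∀ x y, σ.SameCycle x y) (x : S) (g : S → M) :
    ∑ i ∈ Finset.range (Fintype.card S), g ((σ ^ i) x) = ∑ y, g y := by
  have hinj : Injective fun i : Fin (Fintype.card S) ↦ (σ ^ (i : ℕ)) x := fun i j hij ↦
    Fin.ext <| injOn_pow_apply_of_forall_sameCycle hσ x i.2 j.2 hij
  rw [← Fin.sum_univ_eq_sum_range (fun i ↦ g ((σ ^ i) x))]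
  exact ((Fintype.bijective_iff_injective_and_card _).2 ⟨hinj, by simp⟩).sum_comp g

end Equiv.Perm

section SumZero

variable (k : Type*) [Field k] (S : Type*) [Fintype S]

def sumZero : Submodule k (S → k) :=
  LinearMap.ker (∑ x : S, LinearMap.proj (R := k) (φ := fun _ => k) x)

variable {k S}

theorem mem_sumZero {g : S → k} : g ∈ sumZero k S ↔ ∑ x, g x = 0 := by
  simp [sumZero]

theorem finrank_sumZero [Nonempty S] : Module.finrank k (sumZero k S) = Fintype.card S - 1 := by
  classical
  let φ : (S → k) →ₗ[k] k := ∑ x : S, LinearMap.proj x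
  have hφ : Function.Surjective φ := fun c ↦
    ⟨Pi.single (Classical.arbitrary S) c, by simp [φ]⟩
  have := LinearMap.finrank_range_add_finrank_ker φ
  rw [LinearMap.range_eq_top.2 hφ, finrank_top, Module.finrank_self,
    Module.finrank_fintype_fun_eq_card] at this
  exact (Nat.sub_eq_of_eq_add' this.symm).symm

def permAct (σ : Perm S) : sumZero k S →ₗ[k] sumZero k S :=
  (LinearMap.funLeft k k σ).restrict fun g hg ↦ by
    rw [mem_sumZero] at hg ⊢
    exact (Equiv.sum_comp σ g).trans hg

@[simp]
theorem permAct_apply (σ : Perm S) (g : sumZero k S) (x : S) :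
    (permAct σ g : S → k) x = (g : S → k) (σ x) :=
  rfl

theorem permAct_pow_apply (σ : Perm S) (n : ℕ) (g : sumZero k S) (x : S) :
    ((permAct σ ^ n) g : S → k) x = (g : S → k) ((σ ^ n) x) := by
  induction n generalizing x with
  | zero => rfl
  | succ n ih => rw [pow_succ', Module.End.mul_apply, permAct_apply, ih, pow_succ, Perm.mul_apply]

theorem det_id_sub_permAct_eq_zero [CharZero k] {σ : Perm S} {x y : S}
    (hxy : ¬ σ.SameCycle x y) : LinearMap.det (LinearMap.id - permAct (k := k) σ) = 0 := by
  classical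
  let A := Finset.univ.filter (σ.SameCycle x)
  -- `#S` times the indicator of the cycle of `x`, minus its mean
  let g : S → k := fun z ↦ (if σ.SameCycle x z then (Fintype.card S : k) else 0) - A.card
  have hg : g ∈ sumZero k S := by
    rw [mem_sumZero]
    simp only [Finset.sum_sub_distrib, Finset.sum_ite, Finset.sum_const, nsmul_eq_mul,
      Finset.card_univ, g, A]
    ring
  refine LinearMap.det_eq_zero_iff_ker_ne_bot.2 <| (Submodule.ne_bot_iff _).2
    ⟨⟨g, hg⟩, ?_, fun h ↦ ?_⟩
  · rw [LinearMap.mem_ker, LinearMap.sub_apply, LinearMap.id_apply, sub_eq_zero]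
    ext z
    simp [g, permAct_apply, Perm.sameCycle_apply_right]
  · have hy := congrFun (congrArg Subtype.val h) y
    have hA : A.card ≠ 0 := Finset.card_ne_zero.2 ⟨x, by simp [A, Perm.SameCycle.refl]⟩
    simp [g, hxy, hA, A] at hy

theorem aeval_permAct_geom_sum_eq_zero {σ : Perm S} (hσ : ∀ x y, σ.SameCycle x y) :
    aeval (permAct (k := k) σ) (∑ i ∈ Finset.range (Fintype.card S), (X : k[X]) ^ i) = 0 := by
  ext g z
  have := σ.sum_range_pow_apply_of_forall_sameCycle hσ z (g : S → k)
  simp_all [permAct_pow_apply, mem_sumZero.1 g.2]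

theorem linearIndependent_permAct_pow [CharZero k] {σ : Perm S} (hσ : ∀ x y, σ.SameCycle x y)
    {n : ℕ} (hn : Fintype.card S = n + 1) :
    LinearIndependent k fun i : Fin n ↦ permAct (k := k) σ ^ (i : ℕ) := by
  classical
  obtain ⟨x₀⟩ : Nonempty S := Fintype.card_pos_iff.1 (by omega)
  -- `T ^ i w = (n + 1) • δ_{(σ ^ i)⁻¹ x₀} - 1`, so evaluating at `(σ ^ j)⁻¹ x₀` isolates `c j`
  let w : S → k := Fintype.card S • Pi.single x₀ 1 - 1
  have hw : w ∈ sumZero k S := by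
    simp [mem_sumZero, w, Finset.sum_sub_distrib, ← Finset.mul_sum]
  refine LinearIndependent.of_comp (LinearMap.applyₗ ⟨w, hw⟩) ?_
  rw [Fintype.linearIndependent_iff]
  have hpt (i : Fin n) (j : Fin (n + 1)) :
      (σ ^ (i : ℕ)) ((σ ^ (j : ℕ)).symm x₀) = x₀ ↔ i.castSucc = j := by
    rw [σ.pow_apply_symm_pow_apply_eq_self_iff hσ x₀ (by rw [hn]; exact i.2.trans n.lt_succ_self)
      (by rw [hn]; exact j.2), Fin.ext_iff, Fin.val_castSucc]
  intro c hc
  have heval (j : Fin (n + 1)) :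
      ∑ i : Fin n, c i * ((n + 1) * (if i.castSucc = j then 1 else 0) - 1) = 0 := by
    have := congrArg (fun v : sumZero k S ↦ (v : S → k) ((σ ^ (j : ℕ)).symm x₀)) hc
    simpa [permAct_pow_apply, w, Pi.single_apply, hpt, hn] using this
  have hsum : ∑ i, c i = 0 := by simpa [Fin.castSucc_ne_last] using heval (Fin.last n)
  intro i
  have := heval i.castSucc
  simp only [Fin.castSucc_inj, mul_ite, mul_one, mul_zero, mul_sub, Finset.sum_sub_distrib,
    Finset.sum_ite_eq', Finset.mem_univ, ↓reduceIte, hsum, sub_zero, mul_eq_zero] at this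
  exact this.resolve_right (Nat.cast_add_one_ne_zero n)

theorem det_id_sub_permAct_of_forall_sameCycle [CharZero k] [Nonempty S] {σ : Perm S}
    (hσ : ∀ x y, σ.SameCycle x y) :
    LinearMap.det (LinearMap.id - permAct (k := k) σ) = (Fintype.card S : k) := by
  obtain ⟨n, hn⟩ : ∃ n, Fintype.card S = n + 1 := Nat.exists_eq_succ_of_ne_zero Fintype.card_ne_zero
  have hchar : (permAct (k := k) σ).charpoly = ∑ i ∈ Finset.range (n + 1), X ^ i :=
    LinearMap.charpoly_eq_of_linearIndependent_pow (monic_geom_sum_X n.succ_ne_zero)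
      (hn ▸ aeval_permAct_geom_sum_eq_zero hσ) (natDegree_geom_sum_X n)
      (by rw [finrank_sumZero, hn, Nat.add_sub_cancel]) (linearIndependent_permAct_pow hσ hn)
  calc LinearMap.det (LinearMap.id - permAct σ) = (permAct (k := k) σ).charpoly.eval 1 := by
        rw [LinearMap.eval_charpoly, map_one, Module.End.one_eq_id]
    _ = (Fintype.card S : k) := by simp [hchar, eval_geom_sum, hn]

end SumZero

theorem ffVonMangoldt_pow {F : Type} [Field F] {π : F[X]} (hπ : π.Monic) (hirr : Irreducible π)
    {r : ℕ} (hr : 1 ≤ r) : ffVonMangoldt (π ^ r) = π.natDegree := by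
  have h : ∃ π' : F[X], (π'.Monic ∧ Irreducible π') ∧ ∃ r' : ℕ, 1 ≤ r' ∧ π ^ r = π' ^ r' :=
    ⟨π, ⟨hπ, hirr⟩, r, hr, rfl⟩
  rw [ffVonMangoldt, dif_pos h]
  obtain ⟨⟨hπ', hirr'⟩, r', hr', hpow⟩ := Classical.choose_spec h
  have hdvd : Classical.choose h ∣ π :=
    hirr'.prime.dvd_of_dvd_pow ((dvd_pow_self _ (by omega)).trans (dvd_of_eq hpow.symm))
  rw [eq_of_monic_of_associated hπ' hπ (hirr'.associated_of_dvd hirr hdvd)]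

theorem toFinset_aroots_pow {R K : Type*} [CommRing R] [CommRing K] [IsDomain K] [Algebra R K]
    [DecidableEq K] (p : R[X]) {r : ℕ} (hr : r ≠ 0) :
    ((p ^ r).aroots K).toFinset = (p.aroots K).toFinset := by
  rw [aroots_pow, Multiset.toFinset_nsmul _ _ hr]

theorem exists_mem_aroots_aeval_ne_zero {F K : Type*} [Field F] [Field K] [Algebra F K]
    [IsAlgClosed K] {f π : F[X]} (hf : f.Monic) (hπ : π.Monic) (hirr : Irreducible π)
    (hfπ : ∀ r, f ≠ π ^ r) : ∃ y ∈ f.aroots K, aeval y π ≠ 0 := by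
  obtain ⟨n, a, hπa, rfl⟩ := WfDvdMonoid.max_power_factor' hf.ne_zero hirr.not_isUnit
  have ha : a.Monic := (hπ.pow n).of_mul_monic_left hf
  have ha1 : a.natDegree ≠ 0 := fun h ↦ hfπ n (by rw [ha.natDegree_eq_zero.1 h, mul_one])
  obtain ⟨y, hy⟩ := IsAlgClosed.exists_aeval_eq_zero K a
    fun h ↦ ha1 (natDegree_eq_of_degree_eq_some h)
  refine ⟨y, mem_aroots.2 ⟨hf.ne_zero, by rw [map_mul, hy, mul_zero]⟩, fun hπy ↦ ?_⟩
  obtain ⟨u, v, huv⟩ := (hirr.coprime_iff_not_dvd).2 hπa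
  simpa [hπy, hy] using congrArg (aeval y) huv

theorem coe_pow_apply_eq_pow_pow {M : Type*} [Monoid M] {P : M → Prop} {σ : Perm (Subtype P)}
    {q : ℕ} (hσ : ∀ x, (σ x : M) = (x : M) ^ q) (k : ℕ) (x : Subtype P) :
    ((σ ^ k) x : M) = (x : M) ^ q ^ k := by
  induction k with
  | zero => simp
  | succ k ih => rw [pow_succ', Perm.mul_apply, hσ, ih, ← pow_mul, ← pow_succ]

section Frobenius

variable {Fq K : Type*} [Field Fq] [Fintype Fq] [Field K] [Algebra Fq K]

theorem aeval_pow_card_pow (x : K) (p : Fq[X]) (k : ℕ) :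
    aeval (x ^ Fintype.card Fq ^ k) p = aeval x p ^ Fintype.card Fq ^ k := by
  have h := aeval_algHom_apply (FiniteField.frobeniusAlgHom Fq K ^ k) x p
  simpa only [AlgHom.coe_pow, FiniteField.coe_frobeniusAlgHom, pow_iterate] using h

theorem injOn_pow_card_pow {π : Fq[X]} (hπ : Irreducible π) {x : K} (hx : aeval x π = 0) :
    Set.InjOn (fun k : ℕ ↦ x ^ Fintype.card Fq ^ k) (Set.Iio π.natDegree) := by
  have hint : IsIntegral Fq x := IsAlgebraic.isIntegral ⟨π, hπ.ne_zero, hx⟩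
  have := adjoin.finiteDimensional hint
  have : Finite Fq⟮x⟯ := Module.finite_of_finite Fq
  let φ := FiniteField.frobeniusAlgEquivOfAlgebraic Fq Fq⟮x⟯
  have hφ : ∀ (k : ℕ) (z : Fq⟮x⟯), (φ ^ k) z = z ^ Fintype.card Fq ^ k := fun k z ↦ by
    rw [AlgEquiv.coe_pow, FiniteField.coe_frobeniusAlgEquivOfAlgebraic_iterate]
  intro a ha b hb hab
  have hφab : φ ^ a = φ ^ b := AlgEquiv.coe_toAlgHom_injective <|
    adjoin_algHom_ext Fq fun y hy ↦ by
      rw [Set.mem_singleton_iff] at hy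
      subst hy
      exact Subtype.ext (by simpa [hφ] using hab)
  have horder : orderOf φ = π.natDegree := by
    rw [FiniteField.orderOf_frobeniusAlgEquivOfAlgebraic, adjoin.finrank hint,
      ← minpoly.eq_of_irreducible hπ hx,
      natDegree_mul_C (inv_ne_zero (leadingCoeff_ne_zero.2 hπ.ne_zero))]
  rw [← horder] at ha hb
  exact pow_injOn_Iio_orderOf ha hb hφab

variable [DecidableEq K]

theorem image_pow_card_pow_eq_aroots {π : Fq[X]} (hπ : Irreducible π) {x : K}
    (hx : aeval x π = 0) :
    (Finset.range π.natDegree).image (fun k ↦ x ^ Fintype.card Fq ^ k) = (π.aroots K).toFinset := by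
  refine Finset.eq_of_subset_of_card_le (fun y hy ↦ ?_) ?_
  · obtain ⟨k, -, rfl⟩ := Finset.mem_image.1 hy
    rw [Multiset.mem_toFinset, mem_aroots, aeval_pow_card_pow, hx, zero_pow (by positivity)]
    exact ⟨hπ.ne_zero, rfl⟩
  · rw [Finset.card_image_of_injOn (by simpa using injOn_pow_card_pow hπ hx), Finset.card_range]
    calc (π.aroots K).toFinset.card ≤ Multiset.card (π.aroots K) := Multiset.toFinset_card_le _
      _ ≤ (π.map (algebraMap Fq K)).natDegree := card_roots' _
      _ = π.natDegree := natDegree_map _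

theorem card_toFinset_aroots_of_irreducible [IsAlgClosed K] {π : Fq[X]} (hπ : Irreducible π) :
    (π.aroots K).toFinset.card = π.natDegree := by
  obtain ⟨x, hx⟩ := IsAlgClosed.exists_aeval_eq_zero K π (degree_pos_of_irreducible hπ).ne'
  rw [← image_pow_card_pow_eq_aroots hπ hx,
    Finset.card_image_of_injOn (by simpa using injOn_pow_card_pow hπ hx), Finset.card_range]

variable {f : Fq[X]} {σ : Perm {x // x ∈ (f.aroots K).toFinset}}

theorem forall_sameCycle_of_eq_pow (hσ : ∀ x, (σ x : K) = (x : K) ^ Fintype.card Fq)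
    {π : Fq[X]} (hπ : Irreducible π) {r : ℕ} (hr : r ≠ 0) (hf : f = π ^ r) (x y) :
    σ.SameCycle x y := by
  subst hf
  have hroot {z : K} (hz : z ∈ ((π ^ r).aroots K).toFinset) : aeval z π = 0 := by
    rw [toFinset_aroots_pow π hr, Multiset.mem_toFinset, mem_aroots] at hz
    exact hz.2
  have hy : (y : K) ∈ (π.aroots K).toFinset := toFinset_aroots_pow (K := K) π hr ▸ y.2
  rw [← image_pow_card_pow_eq_aroots hπ (hroot x.2)] at hy
  obtain ⟨k, -, hk⟩ := Finset.mem_image.1 hy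
  exact ⟨k, Subtype.ext (by rw [zpow_natCast, coe_pow_apply_eq_pow_pow hσ, hk])⟩

theorem exists_not_sameCycle_of_not_primePow [IsAlgClosed K]
    (hσ : ∀ x, (σ x : K) = (x : K) ^ Fintype.card Fq)
    (hf : f.Monic) (hf0 : f.natDegree ≠ 0)
    (hpp : ¬ ∃ π : Fq[X], (π.Monic ∧ Irreducible π) ∧ ∃ r : ℕ, 1 ≤ r ∧ f = π ^ r) :
    ∃ x y, ¬ σ.SameCycle x y := by
  obtain ⟨π, hπ, hirr, hπf⟩ :=
    exists_monic_irreducible_factor f fun hu ↦ hf0 (natDegree_eq_zero_of_isUnit hu)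
  obtain ⟨x, hx⟩ := IsAlgClosed.exists_aeval_eq_zero K π (degree_pos_of_irreducible hirr).ne'
  have hxf : x ∈ (f.aroots K).toFinset :=
    Multiset.mem_toFinset.2 (mem_aroots.2 ⟨hf.ne_zero, aeval_eq_zero_of_dvd_aeval_eq_zero hπf hx⟩)
  obtain ⟨y, hyf, hy⟩ := exists_mem_aroots_aeval_ne_zero (K := K) hf hπ hirr fun r hfr ↦ by
    rcases r with _ | r
    · exact hf0 (by rw [hfr, pow_zero, natDegree_one])
    · exact hpp ⟨π, ⟨hπ, hirr⟩, r + 1, by omega, hfr⟩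
  -- the roots of `π` are stable under `σ`, and `y` is not one of them
  refine ⟨⟨x, hxf⟩, ⟨y, Multiset.mem_toFinset.2 hyf⟩, fun h ↦ hy ?_⟩
  obtain ⟨k, hk⟩ := h.exists_nat_pow_eq
  have hyx : y = x ^ Fintype.card Fq ^ k :=
    (congrArg Subtype.val hk).symm.trans (coe_pow_apply_eq_pow_pow hσ k _)
  rw [hyx, aeval_pow_card_pow, hx, zero_pow (by positivity)]

end Frobenius

open Classical in
theorem stmt_17 (Fq : Type) [Field Fq] [Fintype Fq] (q : ℕ) (hq : q = Fintype.card Fq)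
    (n : ℕ) (hn : 1 ≤ n) (f : Fq[X]) (hf : f.Monic) (hfn : f.natDegree = n)
    (σ : Equiv.Perm {x : AlgebraicClosure Fq // x ∈ (f.aroots (AlgebraicClosure Fq)).toFinset})
    (hσ : ∀ x, ((σ x : AlgebraicClosure Fq)) = (x : AlgebraicClosure Fq) ^ q)
    (W : Submodule ℂ
      ({x : AlgebraicClosure Fq // x ∈ (f.aroots (AlgebraicClosure Fq)).toFinset} → ℂ))
    (hW : W = LinearMap.ker
      (∑ x : {x : AlgebraicClosure Fq // x ∈ (f.aroots (AlgebraicClosure Fq)).toFinset},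
        LinearMap.proj (R := ℂ) (φ := fun _ => ℂ) x))
    (T : W →ₗ[ℂ] W)
    (hT : ∀ g : W, ∀ x, ((T g : _ → ℂ) x) = (g : _ → ℂ) (σ x)) :
    (ffVonMangoldt f : ℂ) = LinearMap.det (LinearMap.id - T) := by
  subst hW hq
  obtain rfl : T = permAct σ := LinearMap.ext fun g ↦ Subtype.ext (funext (hT g))
  by_cases hpp : ∃ π : Fq[X], (π.Monic ∧ Irreducible π) ∧ ∃ r : ℕ, 1 ≤ r ∧ f = π ^ r
  · obtain ⟨π, ⟨hπ, hirr⟩, r, hr, rfl⟩ := hpp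
    have hcard : Fintype.card {x // x ∈ ((π ^ r).aroots (AlgebraicClosure Fq)).toFinset} =
        π.natDegree := by
      rw [Fintype.card_coe, toFinset_aroots_pow π (by omega),
        card_toFinset_aroots_of_irreducible hirr]
    have : Nonempty {x // x ∈ ((π ^ r).aroots (AlgebraicClosure Fq)).toFinset} :=
      Fintype.card_pos_iff.1 (hcard ▸ hirr.natDegree_pos)
    rw [ffVonMangoldt_pow hπ hirr hr, ← hcard]
    exact (det_id_sub_permAct_of_forall_sameCycle
      (forall_sameCycle_of_eq_pow hσ hirr (by omega) rfl)).symm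
  · obtain ⟨_, _, hxy⟩ := exists_not_sameCycle_of_not_primePow hσ hf (by omega) hpp
    rw [ffVonMangoldt, dif_neg hpp, Nat.cast_zero]
    exact (det_id_sub_permAct_eq_zero hxy).symm
end
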